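/- For all integers $n \geq 2$, $s \geq 0$, and $t \geq 1$, the recursively defined function $V(n, s, t)$ given by $V(n, 0, t) = \binom{t+n}{n}$, $V(2, s, t) = \binom{t+2}{2} - s$, and $V(n, s, t) = V(n, s-1, t-1) + V(n-1, s-1, t-1)$ for $n \geq 3$, $s \geq 1$, satisfies $V(n, s, t) = S_{n,s,t} = \sum_{i=0}^{\min\{\lfloor n/2\rfloor,s\}} (-1)^i\binom{s}{i}\binom{t+n-2i}{n-2i}$. -/
import Mathlib


/-- The multiplicity-1 recursive virtual dimension: `V(n,0,t) = C(t+n,n)` (polynomial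
binomial coefficient), `V(2,s,t) = C(t+2,2) - s`, and
`V(n,s,t) = V(n,s-1,t-1) + V(n-1,s-1,t-1)` for `n ≥ 3`, `s ≥ 1`. -/
def V : ℕ → ℕ → ℤ → ℤ
  | n, 0, t => Ring.choose (t + (n : ℤ)) n
  | 2, s + 1, t => Ring.choose (t + 2) 2 - ((s : ℤ) + 1)
  | (n + 3), s + 1, t => V (n + 3) s (t - 1) + V (n + 2) s (t - 1)
  | 0, _ + 1, _ => 0
  | 1, _ + 1, _ => 0
  termination_by n s _ => n + s
  decreasing_by all_goals omega

/-- `S_{n,s,t} = ∑_{i=0}^{min(⌊n/2⌋,s)} (-1)^i C(s,i) C(t+n-2i, n-2i)`. -/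
def S (n s t : ℕ) : ℤ :=
  ∑ i ∈ Finset.range (min (n / 2) s + 1),
    (-1 : ℤ) ^ i * (s.choose i : ℤ) * ((t + n - 2 * i).choose (n - 2 * i) : ℤ)

/-- Extended version of `S` over integer `t`, with `Ring.choose` and no `min` in the range. -/
def Sz (n s : ℕ) (t : ℤ) : ℤ :=
  ∑ i ∈ Finset.range (n / 2 + 1),
    (-1 : ℤ) ^ i * (s.choose i : ℤ) * Ring.choose (t + ((n - 2 * i : ℕ) : ℤ)) (n - 2 * i)

lemma ring_choose_split (t : ℤ) (k : ℕ) : Ring.choose (t + (k:ℤ) + 1) (k+1)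
    = Ring.choose ((t-1) + ((k:ℤ)+1)) (k+1) + Ring.choose (t + (k:ℤ)) k := by
  have h := Ring.choose_succ_succ (t + (k:ℤ)) k
  rw [show (t-1) + ((k:ℤ)+1) = t + k by ring, h]; ring

/-- `Sz(n+2, s+1, t) = Sz(n+2, s, t) - Sz(n, s, t)` (Pascal on `Nat.choose s i`). -/
lemma Sz_A (n s : ℕ) (t : ℤ) : Sz (n+2) (s+1) t = Sz (n+2) s t - Sz n s t := by
  unfold Sz
  have hdiv : (n+2)/2 = n/2 + 1 := Nat.add_div_right n (by norm_num)
  rw [hdiv, Finset.sum_range_succ' _ (n/2 + 1), Finset.sum_range_succ' _ (n/2 + 1)]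
  rw [eq_sub_iff_add_eq, add_right_comm, ← Finset.sum_add_distrib]
  congr 1
  · apply Finset.sum_congr rfl
    intro i _
    have hidx : n + 2 - 2 * (i + 1) = n - 2 * i := by omega
    rw [hidx, Nat.choose_succ_succ]
    push_cast
    ring
  · simp

/-- `Sz(n+1, s, t) = Sz(n+1, s, t-1) + Sz(n, s, t)` (Pascal on `Ring.choose`). -/
lemma Sz_B (n s : ℕ) (t : ℤ) : Sz (n+1) s t = Sz (n+1) s (t-1) + Sz n s t := by
  rcases Nat.even_or_odd n with ⟨m, rfl⟩ | ⟨m, rfl⟩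
  · unfold Sz
    have h1 : (m+m+1)/2 = m := by omega
    have h2 : (m+m)/2 = m := by omega
    rw [h1, h2, ← Finset.sum_add_distrib]
    apply Finset.sum_congr rfl
    intro i hi
    have hi' : i ≤ m := by simpa [Nat.lt_succ_iff] using hi
    have hk1 : m+m+1 - 2*i = (m+m - 2*i) + 1 := by omega
    rw [hk1, Nat.cast_add, Nat.cast_one, ← add_assoc, ring_choose_split t (m+m - 2*i)]
    ring
  · unfold Sz
    have h1 : (2*m+1+1)/2 = m+1 := by omega
    have h2 : (2*m+1)/2 = m := by omega
    have hlast : 2*m+1+1 - 2*(m+1) = 0 := by omega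
    rw [h1, h2, Finset.sum_range_succ _ (m+1), Finset.sum_range_succ _ (m+1), hlast]
    have hsum : ∑ i ∈ Finset.range (m+1),
        (-1 : ℤ) ^ i * (s.choose i : ℤ) *
          Ring.choose (t + ((2*m+1+1 - 2*i : ℕ) : ℤ)) (2*m+1+1 - 2*i)
      = ∑ i ∈ Finset.range (m+1),
          ((-1 : ℤ) ^ i * (s.choose i : ℤ) *
            Ring.choose ((t-1) + ((2*m+1+1 - 2*i : ℕ) : ℤ)) (2*m+1+1 - 2*i)
          + (-1 : ℤ) ^ i * (s.choose i : ℤ) *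
            Ring.choose (t + ((2*m+1 - 2*i : ℕ) : ℤ)) (2*m+1 - 2*i)) := by
      apply Finset.sum_congr rfl
      intro i hi
      have hi' : i ≤ m := by simpa [Nat.lt_succ_iff] using hi
      have hk1 : 2*m+1+1 - 2*i = (2*m+1 - 2*i) + 1 := by omega
      rw [hk1, Nat.cast_add, Nat.cast_one, ← add_assoc, ring_choose_split t (2*m+1 - 2*i)]
      ring
    rw [hsum, Finset.sum_add_distrib]
    simp [Ring.choose_zero_right]
    ring

/-- The Castelnuovo recursion for `Sz`. -/
lemma Sz_rec (n s : ℕ) (t : ℤ) :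
    Sz (n+3) (s+1) t = Sz (n+3) s (t-1) + Sz (n+2) s (t-1) := by
  have hA := Sz_A (n+1) s t
  have hB1 := Sz_B (n+2) s t
  have hB2 := Sz_B (n+1) s t
  linarith

lemma Sz_zero (n : ℕ) (t : ℤ) : Sz n 0 t = Ring.choose (t + (n : ℤ)) n := by
  unfold Sz
  rw [Finset.sum_eq_single 0]
  · simp
  · intro i _ hi
    obtain ⟨j, rfl⟩ := Nat.exists_eq_succ_of_ne_zero hi
    simp
  · simp

lemma Sz_two (s : ℕ) (t : ℤ) : Sz 2 (s+1) t = Ring.choose (t + 2) 2 - ((s : ℤ) + 1) := by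
  unfold Sz
  rw [show (2:ℕ)/2 + 1 = 2 by norm_num, Finset.sum_range_succ, Finset.sum_range_one]
  norm_num [Ring.choose_zero_right]
  ring

lemma V_eq_Sz : ∀ (N n s : ℕ) (t : ℤ), n + s ≤ N → 2 ≤ n → V n s t = Sz n s t := by
  intro N
  induction N with
  | zero => intro n s t h hn; omega
  | succ N ih =>
    intro n s t h hn
    match n, s with
    | n, 0 => rw [V, Sz_zero]
    | 2, s + 1 => rw [V, Sz_two]
    | n + 3, s + 1 =>
      rw [V, Sz_rec]
      rw [ih (n+3) s (t-1) (by omega) (by omega), ih (n+2) s (t-1) (by omega) (by omega)]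

lemma Sz_eq_S (n s t : ℕ) : Sz n s (t : ℤ) = S n s t := by
  unfold Sz S
  rw [← Finset.sum_subset (Finset.range_subset_range.mpr (by omega :
      min (n / 2) s + 1 ≤ n / 2 + 1))]
  · apply Finset.sum_congr rfl
    intro i hi
    have h2i : 2 * i ≤ n := by
      have := Finset.mem_range.mp hi; omega
    have hcast : (t : ℤ) + ((n - 2*i : ℕ) : ℤ) = ((t + n - 2*i : ℕ) : ℤ) := by
      push_cast [h2i, show 2*i ≤ t + n by omega]; ring
    rw [hcast, Ring.choose_natCast]
  · intro i hi hni
    have hsi : s < i := by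
      simp only [Finset.mem_range] at hi hni
      omega
    rw [Nat.choose_eq_zero_of_lt hsi]
    simp

theorem V_eq_S (n s t : ℕ) (hn : 2 ≤ n) (ht : 1 ≤ t) :
    V n s (t : ℤ) = S n s t := by
  rw [V_eq_Sz (n + s) n s (t : ℤ) le_rfl hn, Sz_eq_S]
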